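/- Let (T, T^p, 𝒮) be a (-d)-Calabi–Yau triple with 𝒮 = add(S). Then for any object X of T, any integer j, and any choice of truncation triangles for X, there is an isomorphism Hom_{T/T^p}(Σ^j S, X) ≅ Hom_T(Σ^j S, X_{≤ -j+d-1}). -/

import Mathlib

open CategoryTheory Category Limits Pretriangulated
open scoped Classical

universe v u

variable (k : Type) [Field k]
variable (T : Type u) [Category.{v} T] [Preadditive T] [Linear k T] [HasZeroObject T]
  [HasShift T ℤ] [∀ n : ℤ, (shiftFunctor T n).Additive] [Pretriangulated T]
  [HasFiniteBiproducts T]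

namespace CategoryTheory.Triangulated

/-- The pre-2025 Mathlib notion of a triangulated subcategory (removed since), restored with its
old fields. -/
structure Subcategory (C : Type*) [Category C] [HasZeroObject C] [HasShift C ℤ] [Preadditive C]
    [∀ n : ℤ, (shiftFunctor C n).Additive] [Pretriangulated C] where
  P : C → Prop
  zero' : ∃ (Z : C) (_ : IsZero Z), P Z
  shift (X : C) (n : ℤ) : P X → P (X⟦n⟧)
  ext₂' (T : Triangle C) (_ : T ∈ distTriang C) : P T.obj₁ → P T.obj₃ →
    ObjectProperty.isoClosure P T.obj₂

/-- The old `Subcategory.W`: morphisms whose cone satisfies `P`. -/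
def Subcategory.W {C : Type*} [Category C] [HasZeroObject C] [HasShift C ℤ] [Preadditive C]
    [∀ n : ℤ, (shiftFunctor C n).Additive] [Pretriangulated C] (S : Subcategory C) :
    MorphismProperty C :=
  fun X Y f => ∃ (Z : C) (g : Y ⟶ Z) (h : Z ⟶ X⟦(1 : ℤ)⟧)
    (_ : Triangle.mk f g h ∈ distTriang C), S.P Z

end CategoryTheory.Triangulated

/-- `T_{>i} = ⊥(Σ^{>-i-1}𝒮)`. -/
def Tgt (𝒮 : Set T) (i : ℤ) : Set T :=
  {X | ∀ (j : ℤ), j > -i - 1 → ∀ s ∈ 𝒮, ∀ f : X ⟶ s⟦j⟧, f = 0}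

/-- `T_{≤i} = ⊥(Σ^{<-i}𝒮)`. -/
def Tle (𝒮 : Set T) (i : ℤ) : Set T :=
  {X | ∀ (j : ℤ), j < -i → ∀ s ∈ 𝒮, ∀ f : X ⟶ s⟦j⟧, f = 0}

/-- `(Σ^{≥0}𝒮)^⊥`. -/
def perpGE (𝒮 : Set T) : Set T :=
  {X | ∀ (j : ℤ), 0 ≤ j → ∀ s ∈ 𝒮, ∀ f : s⟦j⟧ ⟶ X, f = 0}

/-- `(Σ^{<0}𝒮)^⊥`. -/
def perpLT (𝒮 : Set T) : Set T :=
  {X | ∀ (j : ℤ), j < 0 → ∀ s ∈ 𝒮, ∀ f : s⟦j⟧ ⟶ X, f = 0}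

/-- A torsion pair `(𝒳, 𝒴)` on a triangulated category. -/
structure IsTorsionPair (𝒳 𝒴 : Set T) : Prop where
  orth : ∀ X ∈ 𝒳, ∀ Y ∈ 𝒴, ∀ f : X ⟶ Y, f = 0
  tri : ∀ A : T, ∃ (X Y : T) (_ : X ∈ 𝒳) (_ : Y ∈ 𝒴)
    (f : X ⟶ A) (g : A ⟶ Y) (h : Y ⟶ X⟦(1 : ℤ)⟧),
    Triangle.mk f g h ∈ distTriang T

/-- A triangulated subcategory is thick if it is closed under retracts (direct summands). -/
def IsThick (Q : Triangulated.Subcategory T) : Prop :=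
  ∀ X Y : T, (∃ (r : X ⟶ Y) (s : Y ⟶ X), s ≫ r = 𝟙 Y) → Q.P X → Q.P Y

/-- A `(-d)`-Calabi–Yau triple `(T, T^p, 𝒮)` with `𝒮 = add S`: `T` is a `k`-linear,
Hom-finite, Krull–Schmidt (idempotent complete) triangulated category, `T^p` a thick
subcategory with a bifunctorial Serre duality `D Hom(X, Y) ≅ Hom(Y, Σ^{-d} X)` for
`X ∈ T^p`, and `S` the additive generator of a simple minded collection
`𝒮 = {S₁, …, Sₘ}` inducing the two co-t-structures of (RS2), with
`⊥(Σ^{≥0}𝒮) ⊆ T^p` and `(Σ^{<0}𝒮)^⊥ ⊆ T^p`. -/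
structure CYTriple (d : ℕ) where
  homFin : ∀ X Y : T, FiniteDimensional k (X ⟶ Y)
  idem : IsIdempotentComplete T
  P : Triangulated.Subcategory T
  thick : IsThick T P
  serre : ∀ (X Y : T), P.P X → (((X ⟶ Y) →ₗ[k] k) ≃ₗ[k] (Y ⟶ X⟦(-(d : ℤ))⟧))
  serre_natY : ∀ (X Y Y' : T) (hX : P.P X) (g : Y ⟶ Y') (φ : (X ⟶ Y') →ₗ[k] k),
    serre X Y hX (φ.comp (Linear.rightComp k X g)) = g ≫ serre X Y' hX φ
  serre_natX : ∀ (X X' Y : T) (hX : P.P X) (hX' : P.P X') (u : X ⟶ X')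
    (φ : (X ⟶ Y) →ₗ[k] k),
    serre X' Y hX' (φ.comp (Linear.leftComp k Y u)) =
      serre X Y hX φ ≫ (shiftFunctor T (-(d : ℤ))).map u
  S : T
  m : ℕ
  Si : Fin m → T
  decomp : S ≅ ⨁ Si
  indec : ∀ i, ¬ IsZero (Si i) ∧ ∀ (A B : T), (Si i ≅ A ⊞ B) → IsZero A ∨ IsZero B
  smc_orth : ∀ (j : ℤ), j < 0 → ∀ f : S ⟶ S⟦j⟧, f = 0
  smc_dim : ∀ i j, Module.finrank k (Si i ⟶ Si j) = if i = j then 1 else 0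
  smc_gen : ∀ Q : Triangulated.Subcategory T, IsThick T Q → Q.P S → ∀ X, Q.P X
  cot1 : IsTorsionPair T (Tgt T {S} 0) (Tle T {S} 0)
  cot2 : IsTorsionPair T (perpGE T {S}) (perpLT T {S})
  incl1 : Tgt T {S} 0 ⊆ P.P
  incl2 : perpLT T {S} ⊆ P.P


/-!
Since `A ∈ T_{>-j+d-1} ⊆ T^p`, `Q g` is invertible, and it suffices that `Q` is bijective on
`Hom(Σʲ S, B)` for `B ∈ T_{≤ -j+d-1}`. By Serre duality `Hom(Σʲ S, p) = 0` for
`p ∈ T^p ∩ T_{≤ -j+d-1}`. Hence if `w : V₁ → V₂` has cone in `T^p`, every map `z` induced by `w`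
between `(-j+d-1)`-truncations is bijective on `Hom(Σʲ S, -)`: truncating the fibre of `w`
gives such a `p`, the cone `a` of `p → (V₁)_{≤ -j+d-1}` is bijective on `Hom(Σʲ S, -)`, and
there `a` agrees with `z` followed by a map `c` that `Q` inverts. A morphism `Q(Σʲ S) → Q B` is a
left fraction `(Q s)⁻¹ Q f`; composing `s` and `f` with a truncation of their common target
turns it into a morphism `Σʲ S → B`.

As `T` is only pretriangulated, the class of morphisms with cone in `T^p` need not be closed
under composition; its multiplicative closure has a left calculus of fractions and the same
localization, so fractions are taken with respect to it.
-/

namespace CategoryTheory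

namespace MorphismProperty

variable {C : Type*} [Category C] (W : MorphismProperty C)

lemma hasLeftCalculusOfFractions_multiplicativeClosure
    (hOre : ∀ ⦃X Y : C⦄ (φ : W.RightFraction X Y),
      ∃ ψ : W.LeftFraction X Y, φ.f ≫ ψ.s = φ.s ≫ ψ.f)
    (hext : ∀ ⦃X' X Y : C⦄ (f₁ f₂ : X ⟶ Y) (s : X' ⟶ X) (_ : W s) (_ : s ≫ f₁ = s ≫ f₂),
      ∃ (Y' : C) (t : Y ⟶ Y') (_ : W t), f₁ ≫ t = f₂ ≫ t) :
    W.multiplicativeClosure.HasLeftCalculusOfFractions where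
  exists_leftFraction X Y φ := by
    obtain ⟨s, hs, f⟩ := φ
    induction hs generalizing Y with
    | of s hs =>
      obtain ⟨ψ, hψ⟩ := hOre (RightFraction.mk s hs f)
      exact ⟨LeftFraction.mk ψ.f ψ.s (.of _ ψ.hs), hψ⟩
    | id X => exact ⟨LeftFraction.mk f (𝟙 Y) (.id Y), by simp⟩
    | comp_of s₁ w _ hw ih =>
      obtain ⟨ψ₁, h₁⟩ := ih _ f
      obtain ⟨ψ₂, h₂⟩ := hOre (RightFraction.mk w hw ψ₁.f)
      refine ⟨LeftFraction.mk ψ₂.f (ψ₁.s ≫ ψ₂.s) (.comp_of _ _ ψ₁.hs ψ₂.hs), ?_⟩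
      rw [reassoc_of% h₁, h₂, assoc]
  ext X' X Y f₁ f₂ s hs h := by
    induction hs generalizing Y with
    | of s hs =>
      obtain ⟨Y', t, ht, e⟩ := hext f₁ f₂ s hs h
      exact ⟨Y', t, .of t ht, e⟩
    | id X => exact ⟨Y, 𝟙 Y, .id Y, by simpa using h⟩
    | comp_of s₁ w _ hw ih =>
      obtain ⟨Y₁, t₁, ht₁, e₁⟩ := ih _ (w ≫ f₁) (w ≫ f₂) (by simpa using h)
      obtain ⟨Y₂, t₂, ht₂, e₂⟩ := hext (f₁ ≫ t₁) (f₂ ≫ t₁) w hw (by simpa using e₁)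
      exact ⟨Y₂, t₁ ≫ t₂, .comp_of _ _ ht₁ ht₂, by simpa using e₂⟩

lemma isLocalization_multiplicativeClosure {D : Type*} [Category D] (L : C ⥤ D)
    [L.IsLocalization W] : L.IsLocalization W.multiplicativeClosure := by
  have hL : W.multiplicativeClosure.IsInvertedBy L := by
    rw [IsInvertedBy.iff_le_inverseImage_isomorphisms, multiplicativeClosure_le_iff,
      ← IsInvertedBy.iff_le_inverseImage_isomorphisms]
    exact Localization.inverts L W
  exact Functor.IsLocalization.of_equivalence_source L W L _ Equivalence.refl
    (fun _ _ f hf => le_isoClosure _ _ (.of f hf)) hL L.leftUnitor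

end MorphismProperty

namespace Triangulated.Subcategory

variable {C : Type*} [Category C] [HasZeroObject C] [HasShift C ℤ] [Preadditive C]
  [∀ n : ℤ, (shiftFunctor C n).Additive] [Pretriangulated C] (S : Subcategory C)

lemma W.mk {Tr : Triangle C} (hTr : Tr ∈ distTriang C) (h : S.P Tr.obj₃) : S.W Tr.mor₁ :=
  ⟨_, _, _, hTr, h⟩

lemma W.mk' {Tr : Triangle C} (hTr : Tr ∈ distTriang C) (h : S.P Tr.obj₁) : S.W Tr.mor₂ :=
  ⟨_, _, _, rot_of_distTriang _ hTr, S.shift _ 1 h⟩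

lemma W_id (X : C) : S.W (𝟙 X) := by
  obtain ⟨Z, hZ, hP⟩ := S.zero'
  refine ⟨Z, 0, 0, isomorphic_distinguished _ (contractible_distinguished X) _ ?_, hP⟩
  exact Triangle.isoMk _ _ (Iso.refl _) (Iso.refl _) hZ.isoZero rfl
    ((isZero_zero C).eq_of_tgt _ _) (hZ.eq_of_src _ _)

lemma W_exists_leftFraction {X Y : C} (φ : S.W.RightFraction X Y) :
    ∃ ψ : S.W.LeftFraction X Y, φ.f ≫ ψ.s = φ.s ≫ ψ.f := by
  obtain ⟨Z, f, g, H, mem⟩ := φ.hs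
  obtain ⟨Y', s', f', mem'⟩ := distinguished_cocone_triangle₂ (g ≫ φ.f⟦1⟧')
  obtain ⟨b, hb, -⟩ :=
    complete_distinguished_triangle_morphism₂ _ _ H mem' φ.f (𝟙 Z) (id_comp _).symm
  exact ⟨MorphismProperty.LeftFraction.mk b s' (W.mk S mem' mem), hb.symm⟩

lemma W_ext {X' X Y : C} (f₁ f₂ : X ⟶ Y) (s : X' ⟶ X) (hs : S.W s) (hf : s ≫ f₁ = s ≫ f₂) :
    ∃ (Y' : C) (t : Y ⟶ Y') (_ : S.W t), f₁ ≫ t = f₂ ≫ t := by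
  obtain ⟨Z, g, h, H, mem⟩ := hs
  have hf' : s ≫ (f₁ - f₂) = 0 := by rw [Preadditive.comp_sub, hf, sub_self]
  obtain ⟨q, hq⟩ : ∃ q : Z ⟶ Y, f₁ - f₂ = g ≫ q := Triangle.yoneda_exact₂ _ H _ hf'
  obtain ⟨Y', r, t, mem'⟩ := distinguished_cocone_triangle q
  have hqr : q ≫ r = 0 := comp_distTriang_mor_zero₁₂ _ mem'
  refine ⟨Y', r, W.mk' S mem' mem, ?_⟩
  rw [← sub_eq_zero, ← Preadditive.sub_comp, hq, assoc, hqr, comp_zero]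

instance : S.W.multiplicativeClosure.HasLeftCalculusOfFractions :=
  S.W.hasLeftCalculusOfFractions_multiplicativeClosure (fun _ _ φ => S.W_exists_leftFraction φ)
    (fun _ _ _ f₁ f₂ s hs hf => S.W_ext f₁ f₂ s hs hf)

end Triangulated.Subcategory

end CategoryTheory

section Shift

variable {C : Type*} [Category C] [HasZeroMorphisms C] [HasShift C ℤ]

lemma shift_hom_eq_zero {X Y : C} (a : ℤ) (h : ∀ g : X ⟶ Y⟦-a⟧, g = 0) (f : X⟦a⟧ ⟶ Y) :
    f = 0 :=
  ((shiftEquiv C a).toAdjunction.homEquiv X Y).injective ((h _).trans (h _).symm)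

lemma shift_hom_shift_eq_zero {X Y : C} (a i : ℤ) (h : ∀ g : X ⟶ Y⟦i - a⟧, g = 0)
    (f : X⟦a⟧ ⟶ Y⟦i⟧) : f = 0 :=
  shift_hom_eq_zero a (fun g => (cancel_mono
    ((shiftFunctorAdd' C i (-a) (i - a) (by ring)).app Y).inv).1 (by rw [zero_comp]; exact h _)) f

end Shift

section Orthogonal

variable {C : Type*} [Category C] [Preadditive C] [HasShift C ℤ] {𝒮 : Set C}

lemma shift_mem_Tle {X : C} {m : ℤ} (hX : X ∈ Tle C 𝒮 m) {a m' : ℤ} (h : m = m' + a) :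
    X⟦a⟧ ∈ Tle C 𝒮 m' :=
  fun i hi s hs => shift_hom_shift_eq_zero a i (hX (i - a) (by omega) s hs)

lemma shift_mem_Tgt {X : C} {m : ℤ} (hX : X ∈ Tgt C 𝒮 m) {a m' : ℤ} (h : m = m' + a) :
    X⟦a⟧ ∈ Tgt C 𝒮 m' :=
  fun i hi s hs => shift_hom_shift_eq_zero a i (hX (i - a) (by omega) s hs)

lemma Tle_mono {m m' : ℤ} (h : m ≤ m') {X : C} (hX : X ∈ Tle C 𝒮 m) : X ∈ Tle C 𝒮 m' :=
  fun i hi s hs => hX i (by omega) s hs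

variable [HasZeroObject C] [∀ n : ℤ, (shiftFunctor C n).Additive] [Pretriangulated C]

lemma obj₂_mem_Tle {m : ℤ} {Tr : Triangle C} (hTr : Tr ∈ distTriang C)
    (h₁ : Tr.obj₁ ∈ Tle C 𝒮 m) (h₃ : Tr.obj₃ ∈ Tle C 𝒮 m) : Tr.obj₂ ∈ Tle C 𝒮 m := by
  intro i hi s hs f
  obtain ⟨g, rfl⟩ := Triangle.yoneda_exact₂ _ hTr f (h₁ i hi s hs _)
  rw [h₃ i hi s hs g, comp_zero]

lemma distinguished_mk_of_iso₂ {X Y Y' Z : C} {a : X ⟶ Y} {b : Y ⟶ Z} {c : Z ⟶ X⟦(1 : ℤ)⟧}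
    (H : Triangle.mk a b c ∈ distTriang C) (e : Y ≅ Y') :
    Triangle.mk (a ≫ e.hom) (e.inv ≫ b) c ∈ distTriang C :=
  isomorphic_distinguished _ H _ (Triangle.isoMk _ _ (Iso.refl _) e.symm (Iso.refl _)
    (by simp [Triangle.mk]) (by simp [Triangle.mk]) (by simp [Triangle.mk]))

structure Truncation (𝒮 : Set C) (n : ℤ) (X : C) where
  A : C
  B : C
  f : A ⟶ X
  g : X ⟶ B
  h : B ⟶ A⟦(1 : ℤ)⟧
  hA : A ∈ Tgt C 𝒮 n
  hB : B ∈ Tle C 𝒮 n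
  dist : Triangle.mk f g h ∈ distTriang C

open ZeroObject in
noncomputable def Truncation.ofMemTle {n : ℤ} {B : C} (hB : B ∈ Tle C 𝒮 n) :
    Truncation 𝒮 n B where
  A := 0
  B := B
  f := 0
  g := 𝟙 B
  h := 0
  hA _ _ _ _ f := (isZero_zero C).eq_of_src f 0
  hB := hB
  dist := contractible_distinguished₁ B

end Orthogonal

namespace CYTriple

variable {k T} {d : ℕ} (E : CYTriple k T d)

lemma prop_of_iso {X Y : T} (h : E.P.P X) (e : X ≅ Y) : E.P.P Y :=
  E.thick X Y ⟨e.hom, e.inv, e.inv_hom_id⟩ h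

lemma prop_obj₃ {Tr : Triangle T} (hTr : Tr ∈ distTriang T) (h₁ : E.P.P Tr.obj₁)
    (h₂ : E.P.P Tr.obj₂) : E.P.P Tr.obj₃ := by
  obtain ⟨Z, hZ, ⟨e⟩⟩ := E.P.ext₂' _ (rot_of_distTriang _ hTr) h₂ (E.P.shift _ 1 h₁)
  exact E.prop_of_iso hZ e.symm

lemma hom_eq_zero_of_mem_Tgt_of_mem_Tle {m : ℤ} {X Y : T} (hX : X ∈ Tgt T {E.S} m)
    (hY : Y ∈ Tle T {E.S} m) (f : X ⟶ Y) : f = 0 := by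
  apply (shiftFunctor T m).map_injective
  rw [Functor.map_zero]
  exact E.cot1.orth _ (shift_mem_Tgt hX (by ring)) _ (shift_mem_Tle hY (by ring)) _

lemma prop_of_mem_Tgt {m : ℤ} {X : T} (hX : X ∈ Tgt T {E.S} m) : E.P.P X :=
  E.prop_of_iso (E.P.shift _ (-m) (E.incl1 (shift_mem_Tgt hX (by ring)))) (shiftShiftNeg X m)

lemma exists_truncation (n : ℤ) (X : T) : Nonempty (Truncation {E.S} n X) := by
  obtain ⟨A, B, hA, hB, f, g, h, H⟩ := E.cot1.tri (X⟦n⟧)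
  let Tr := (Triangle.shiftFunctor T (-n)).obj (Triangle.mk f g h)
  let e : X⟦n⟧⟦-n⟧ ≅ X := shiftShiftNeg X n
  refine ⟨⟨A⟦-n⟧, B⟦-n⟧, Tr.mor₁ ≫ e.hom, e.inv ≫ Tr.mor₂, Tr.mor₃,
    shift_mem_Tgt hA (by ring), shift_mem_Tle hB (by ring),
    distinguished_mk_of_iso₂ (Triangle.shift_distinguished _ H (-n)) e⟩⟩

section Truncation

variable {E}

lemma _root_.Truncation.exists_factor {n : ℤ} {X : T} (D : Truncation {E.S} n X) {Y : T}
    (hY : Y ∈ Tle T {E.S} n) (φ : X ⟶ Y) : ∃ ψ : D.B ⟶ Y, D.g ≫ ψ = φ := by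
  obtain ⟨ψ, hψ⟩ := Triangle.yoneda_exact₂ _ D.dist φ
    (E.hom_eq_zero_of_mem_Tgt_of_mem_Tle D.hA hY _)
  exact ⟨ψ, hψ.symm⟩

lemma _root_.Truncation.g_mem_W {n : ℤ} {X : T} (D : Truncation {E.S} n X) : E.P.W D.g :=
  Triangulated.Subcategory.W.mk' E.P D.dist (E.prop_of_mem_Tgt D.hA)

lemma _root_.Truncation.prop_B {n : ℤ} {X : T} (D : Truncation {E.S} n X) (hX : E.P.P X) :
    E.P.P D.B :=
  E.prop_obj₃ D.dist (E.prop_of_mem_Tgt D.hA) hX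

end Truncation

/-- Serre duality: `Hom(Σʲ S, p)` is dual to `Hom(Σᵈ p, Σʲ S) ≅ Hom(p, Σ^{j-d} S)`, which vanishes
because `p ∈ T_{≤ -j+d-1}`. -/
lemma hom_eq_zero_of_prop (j : ℤ) {p : T} (hp : E.P.P p) (hle : p ∈ Tle T {E.S} (-j + d - 1))
    (c : E.S⟦j⟧ ⟶ p) : c = 0 := by
  have : Subsingleton (p⟦(d : ℤ)⟧ ⟶ E.S⟦j⟧) := ⟨fun f f' => by
    rw [shift_hom_shift_eq_zero (d : ℤ) j (hle (j - d) (by omega) E.S rfl) f,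
      shift_hom_shift_eq_zero (d : ℤ) j (hle (j - d) (by omega) E.S rfl) f']⟩
  have : Subsingleton (E.S⟦j⟧ ⟶ p⟦(d : ℤ)⟧⟦-(d : ℤ)⟧) :=
    (E.serre _ _ (E.P.shift p d hp)).toEquiv.symm.subsingleton
  exact (cancel_mono (shiftShiftNeg p (d : ℤ)).inv).1 (Subsingleton.elim _ _)

lemma comp_eq_zero_of_prop (j : ℤ) {p Y : T} (hp : E.P.P p)
    (hY : Y ∈ Tle T {E.S} (-j + d - 1)) (α : E.S⟦j⟧ ⟶ p) (β : p ⟶ Y) : α ≫ β = 0 := by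
  obtain ⟨D⟩ := E.exists_truncation (-j + d - 1) p
  obtain ⟨β', rfl⟩ := D.exists_factor hY β
  rw [← assoc, E.hom_eq_zero_of_prop j (D.prop_B hp) D.hB (α ≫ D.g), zero_comp]

variable {E} in
lemma _root_.Truncation.comp_eq_comp {j : ℤ} {X : T} (D : Truncation {E.S} (-j + d - 1) X) {Y : T}
    (hY : Y ∈ Tle T {E.S} (-j + d - 1)) {ψ₁ ψ₂ : D.B ⟶ Y} (h : D.g ≫ ψ₁ = D.g ≫ ψ₂)
    (x : E.S⟦j⟧ ⟶ D.B) : x ≫ ψ₁ = x ≫ ψ₂ := by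
  have h' : D.g ≫ (ψ₁ - ψ₂) = 0 := by rw [Preadditive.comp_sub, h, sub_self]
  obtain ⟨κ, hκ⟩ : ∃ κ : D.A⟦(1 : ℤ)⟧ ⟶ Y, ψ₁ - ψ₂ = D.h ≫ κ :=
    Triangle.yoneda_exact₃ _ D.dist _ h'
  rw [← sub_eq_zero, ← Preadditive.comp_sub, hκ, ← assoc]
  exact E.comp_eq_zero_of_prop j (E.P.shift _ 1 (E.prop_of_mem_Tgt D.hA)) hY _ _

lemma bijective_comp_mor₂ (j : ℤ) {Tr : Triangle T} (hTr : Tr ∈ distTriang T)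
    (hP : E.P.P Tr.obj₁) (hle : Tr.obj₁ ∈ Tle T {E.S} (-j + d - 1)) :
    Function.Bijective (fun x : E.S⟦j⟧ ⟶ Tr.obj₂ => x ≫ Tr.mor₂) := by
  constructor
  · intro x y hxy
    have hxy' : (x - y) ≫ Tr.mor₂ = 0 := by rw [Preadditive.sub_comp, sub_eq_zero]; exact hxy
    obtain ⟨ζ, hζ⟩ := Triangle.coyoneda_exact₂ _ hTr _ hxy'
    rw [← sub_eq_zero, hζ, E.hom_eq_zero_of_prop j hP hle ζ, zero_comp]
  · intro u
    have hle' : Tr.obj₁⟦(1 : ℤ)⟧ ∈ Tle T {E.S} (-j + d - 1) :=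
      Tle_mono (by omega) (shift_mem_Tle hle (m' := -j + d - 1 - 1) (by ring))
    obtain ⟨v, hv⟩ := Triangle.coyoneda_exact₃ _ hTr u
      (E.hom_eq_zero_of_prop j (E.P.shift _ 1 hP) hle' _)
    exact ⟨v, hv.symm⟩

/-- `a` is the cone of the map `K → D₁.B` induced by the fibre `N⟦-1⟧ → V₁` of `w`, where
`K ∈ T^p ∩ T_{≤ -j+d-1}` is the truncation of `N⟦-1⟧`; `c` comes from `V₂ → B'` factoring
through the truncation of `V₂`. -/
lemma exists_bijective_of_mem_W (j : ℤ) {V₁ V₂ : T} {w : V₁ ⟶ V₂} (hw : E.P.W w)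
    (D₁ : Truncation {E.S} (-j + d - 1) V₁) (D₂ : Truncation {E.S} (-j + d - 1) V₂) :
    ∃ (B' : T) (_ : B' ∈ Tle T {E.S} (-j + d - 1)) (a : D₁.B ⟶ B') (c : D₂.B ⟶ B'),
      E.P.W a ∧ w ≫ D₂.g ≫ c = D₁.g ≫ a ∧
      Function.Bijective (fun x : E.S⟦j⟧ ⟶ D₁.B => x ≫ a) := by
  obtain ⟨N, π, q, Hw, hN⟩ := hw
  let Tα := (Triangle.mk w π q).invRotate
  have Hα : Tα ∈ distTriang T := inv_rot_of_distTriang _ Hw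
  obtain ⟨Dβ⟩ := E.exists_truncation (-j + d - 1) Tα.obj₁
  have hK : E.P.P Dβ.B := Dβ.prop_B (E.P.shift N (-1) hN)
  obtain ⟨θ, hθ⟩ := Dβ.exists_factor D₁.hB (Tα.mor₁ ≫ D₁.g)
  obtain ⟨B', a, b, Hδ⟩ := distinguished_cocone_triangle θ
  have hB' : B' ∈ Tle T {E.S} (-j + d - 1) :=
    obj₂_mem_Tle (rot_of_distTriang _ Hδ) D₁.hB
      (Tle_mono (by omega) (shift_mem_Tle Dβ.hB (m' := -j + d - 1 - 1) (by ring)))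
  obtain ⟨τ, hτ, -⟩ := complete_distinguished_triangle_morphism Tα (Triangle.mk θ a b)
    Hα Hδ Dβ.g D₁.g hθ.symm
  obtain ⟨c, hc⟩ := D₂.exists_factor hB' τ
  refine ⟨B', hB', a, c, Triangulated.Subcategory.W.mk' E.P Hδ hK, ?_,
    E.bijective_comp_mor₂ j Hδ hK Dβ.hB⟩
  rw [hc]
  exact hτ

lemma injective_comp_of_mem_W (j : ℤ) {V₁ V₂ : T} {w : V₁ ⟶ V₂} (hw : E.P.W w)
    (D₁ : Truncation {E.S} (-j + d - 1) V₁) (D₂ : Truncation {E.S} (-j + d - 1) V₂)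
    {z : D₁.B ⟶ D₂.B} (hz : D₁.g ≫ z = w ≫ D₂.g) :
    Function.Injective (fun x : E.S⟦j⟧ ⟶ D₁.B => x ≫ z) := by
  obtain ⟨B', hB', a, c, -, hc, ha⟩ := E.exists_bijective_of_mem_W j hw D₁ D₂
  have hza : ∀ x : E.S⟦j⟧ ⟶ D₁.B, x ≫ z ≫ c = x ≫ a :=
    D₁.comp_eq_comp hB' (by rw [reassoc_of% hz, hc])
  refine Function.Injective.of_comp (f := fun y => y ≫ c) ?_
  convert ha.1 using 1
  funext x
  exact (assoc _ _ _).trans (hza x)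

lemma prop_of_multiplicativeClosure (j : ℤ) (Pr : ∀ {A B : T}, (A ⟶ B) → Prop)
    (congr : ∀ {A B : T} {φ ψ : A ⟶ B}, (∀ x : E.S⟦j⟧ ⟶ A, x ≫ φ = x ≫ ψ) → Pr φ → Pr ψ)
    (comp : ∀ {A B C : T} {φ : A ⟶ B} {ψ : B ⟶ C}, Pr φ → Pr ψ → Pr (φ ≫ ψ))
    (of_W : ∀ {V₁ V₂ : T} {w : V₁ ⟶ V₂}, E.P.W w →
      ∀ (D₁ : Truncation {E.S} (-j + d - 1) V₁) (D₂ : Truncation {E.S} (-j + d - 1) V₂)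
        {z : D₁.B ⟶ D₂.B}, D₁.g ≫ z = w ≫ D₂.g → Pr z)
    {V₁ V₂ : T} {s : V₁ ⟶ V₂} (hs : E.P.W.multiplicativeClosure s)
    (D₁ : Truncation {E.S} (-j + d - 1) V₁) (D₂ : Truncation {E.S} (-j + d - 1) V₂)
    {z : D₁.B ⟶ D₂.B} (hz : D₁.g ≫ z = s ≫ D₂.g) : Pr z := by
  induction hs with
  | of w hw => exact of_W hw D₁ D₂ hz
  | id V => exact of_W (E.P.W_id V) D₁ D₂ hz
  | comp_of s₁ w _ hw ih =>
    obtain ⟨D⟩ := E.exists_truncation (-j + d - 1) _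
    obtain ⟨z₁, hz₁⟩ := D₁.exists_factor D.hB (s₁ ≫ D.g)
    obtain ⟨z₂, hz₂⟩ := D.exists_factor D₂.hB (w ≫ D₂.g)
    refine congr (D₁.comp_eq_comp D₂.hB ?_) (comp (ih D₁ D hz₁) (of_W hw D D₂ hz₂))
    rw [reassoc_of% hz₁, hz₂, hz, assoc]

lemma injective_comp_of_multiplicativeClosure (j : ℤ) {V₁ V₂ : T} {s : V₁ ⟶ V₂}
    (hs : E.P.W.multiplicativeClosure s)
    (D₁ : Truncation {E.S} (-j + d - 1) V₁) (D₂ : Truncation {E.S} (-j + d - 1) V₂)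
    {z : D₁.B ⟶ D₂.B} (hz : D₁.g ≫ z = s ≫ D₂.g) :
    Function.Injective (fun x : E.S⟦j⟧ ⟶ D₁.B => x ≫ z) := by
  refine E.prop_of_multiplicativeClosure j (fun z => Function.Injective (fun x => x ≫ z))
    (fun h hφ => ?_) (fun hφ hψ => ?_) (E.injective_comp_of_mem_W j) hs D₁ D₂ hz
  · rwa [← funext h]
  · simpa [Function.comp_def] using hψ.comp hφ

lemma map_injective {D : Type*} [Category D] (Q : T ⥤ D) [Q.IsLocalization E.P.W] (j : ℤ) {B : T}
    (hB : B ∈ Tle T {E.S} (-j + d - 1)) :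
    Function.Injective (Q.map : (E.S⟦j⟧ ⟶ B) → (Q.obj (E.S⟦j⟧) ⟶ Q.obj B)) := by
  have := E.P.W.isLocalization_multiplicativeClosure Q
  intro b₁ b₂ h
  obtain ⟨Y, s, hs, e⟩ :=
    (MorphismProperty.map_eq_iff_postcomp Q E.P.W.multiplicativeClosure b₁ b₂).1 h
  obtain ⟨DY⟩ := E.exists_truncation (-j + d - 1) Y
  have hinj : Function.Injective (fun x : E.S⟦j⟧ ⟶ B => x ≫ s ≫ DY.g) :=
    E.injective_comp_of_multiplicativeClosure j hs (Truncation.ofMemTle hB) DY (id_comp _)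
  exact hinj (by simp only [reassoc_of% e])

lemma surjective_comp_of_mem_W (j : ℤ) {V₁ V₂ : T} {w : V₁ ⟶ V₂} (hw : E.P.W w)
    (D₁ : Truncation {E.S} (-j + d - 1) V₁) (D₂ : Truncation {E.S} (-j + d - 1) V₂)
    {z : D₁.B ⟶ D₂.B} (hz : D₁.g ≫ z = w ≫ D₂.g) :
    Function.Surjective (fun x : E.S⟦j⟧ ⟶ D₁.B => x ≫ z) := by
  obtain ⟨B', hB', a, c, ha, hc, hbij⟩ := E.exists_bijective_of_mem_W j hw D₁ D₂
  have hza : ∀ x : E.S⟦j⟧ ⟶ D₁.B, x ≫ z ≫ c = x ≫ a :=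
    D₁.comp_eq_comp hB' (by rw [reassoc_of% hz, hc])
  have hL {X Y : T} {u : X ⟶ Y} (hu : E.P.W u) : IsIso (E.P.W.Q.map u) :=
    Localization.inverts _ _ _ hu
  have := hL hw
  have := hL D₁.g_mem_W
  have := hL D₂.g_mem_W
  have := hL ha
  have : IsIso (E.P.W.Q.map D₂.g ≫ E.P.W.Q.map c) :=
    IsIso.of_isIso_fac_left (f := E.P.W.Q.map w) (by simpa using congrArg E.P.W.Q.map hc)
  have : IsIso (E.P.W.Q.map c) := IsIso.of_isIso_comp_left (E.P.W.Q.map D₂.g) _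
  intro y
  obtain ⟨x, hx⟩ := hbij.2 (y ≫ c)
  refine ⟨x, E.map_injective E.P.W.Q j D₂.hB ?_⟩
  rw [← cancel_mono (E.P.W.Q.map c), ← E.P.W.Q.map_comp, ← E.P.W.Q.map_comp, assoc, hza]
  exact congrArg E.P.W.Q.map hx

lemma surjective_comp_of_multiplicativeClosure (j : ℤ) {V₁ V₂ : T} {s : V₁ ⟶ V₂}
    (hs : E.P.W.multiplicativeClosure s)
    (D₁ : Truncation {E.S} (-j + d - 1) V₁) (D₂ : Truncation {E.S} (-j + d - 1) V₂)
    {z : D₁.B ⟶ D₂.B} (hz : D₁.g ≫ z = s ≫ D₂.g) :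
    Function.Surjective (fun x : E.S⟦j⟧ ⟶ D₁.B => x ≫ z) := by
  refine E.prop_of_multiplicativeClosure j (fun z => Function.Surjective (fun x => x ≫ z))
    (fun h hφ => ?_) (fun hφ hψ => ?_) (E.surjective_comp_of_mem_W j) hs D₁ D₂ hz
  · rwa [← funext h]
  · simpa [Function.comp_def] using hψ.comp hφ

lemma map_bijective {D : Type*} [Category D] (Q : T ⥤ D) [Q.IsLocalization E.P.W] (j : ℤ) {B : T}
    (hB : B ∈ Tle T {E.S} (-j + d - 1)) :
    Function.Bijective (Q.map : (E.S⟦j⟧ ⟶ B) → (Q.obj (E.S⟦j⟧) ⟶ Q.obj B)) := by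
  refine ⟨E.map_injective Q j hB, fun α => ?_⟩
  have := E.P.W.isLocalization_multiplicativeClosure Q
  obtain ⟨φ, rfl⟩ := Localization.exists_leftFraction Q E.P.W.multiplicativeClosure α
  obtain ⟨DY⟩ := E.exists_truncation (-j + d - 1) φ.Y'
  have hsurj : Function.Surjective (fun x : E.S⟦j⟧ ⟶ B => x ≫ φ.s ≫ DY.g) :=
    E.surjective_comp_of_multiplicativeClosure j φ.hs (Truncation.ofMemTle hB) DY (id_comp _)
  obtain ⟨b, hb⟩ := hsurj (φ.f ≫ DY.g)
  have := Localization.inverts Q _ _ DY.g_mem_W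
  have hb' : b ≫ φ.s ≫ DY.g = φ.f ≫ DY.g := hb
  refine ⟨b, (cancel_mono (Q.map φ.s ≫ Q.map DY.g)).1 ?_⟩
  calc Q.map b ≫ Q.map φ.s ≫ Q.map DY.g = Q.map (φ.f ≫ DY.g) := by
        rw [← hb', Q.map_comp, Q.map_comp]
    _ = _ := by rw [Q.map_comp, ← φ.map_comp_map_s Q (Localization.inverts _ _), assoc]

end CYTriple

/-- Let `(T, T^p, 𝒮)` be a `(-d)`-Calabi–Yau triple with `𝒮 = add S` and let
`Q : T ⥤ T/T^p` be the Verdier quotient functor.  Then for any object `X` of `T`, any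
integer `j`, and any choice of truncation triangle
`X_{>-j+d-1} → X → X_{≤-j+d-1} → Σ X_{>-j+d-1}`, there is an isomorphism
`Hom_{T/T^p}(Σ^j S, X) ≅ Hom_T(Σ^j S, X_{≤-j+d-1})`. -/
theorem stmt9 {D : Type u} [Category.{v} D] [Preadditive D] [Linear k D]
    (d : ℕ) (E : CYTriple k T d)
    (Q : T ⥤ D) [Q.Additive] [Q.Linear k] [Q.IsLocalization E.P.W]
    (X : T) (j : ℤ)
    (A B : T) (hA : A ∈ Tgt T {E.S} (-j + d - 1)) (hB : B ∈ Tle T {E.S} (-j + d - 1))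
    (f : A ⟶ X) (g : X ⟶ B) (h : B ⟶ A⟦(1 : ℤ)⟧)
    (htri : Triangle.mk f g h ∈ distTriang T) :
    Nonempty (((E.S⟦j⟧ ⟶ B)) ≃ₗ[k] (Q.obj (E.S⟦j⟧) ⟶ Q.obj X)) := by
  have : IsIso (Q.map g) := Localization.inverts Q E.P.W g
    (Triangulated.Subcategory.W.mk' E.P htri (E.prop_of_mem_Tgt hA))
  exact ⟨LinearEquiv.ofBijective (Q.mapLinearMap k) (E.map_bijective Q j hB) ≪≫ₗ
    Linear.homCongr k (Iso.refl _) (asIso (Q.map g)).symm⟩
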